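/- arXiv:2101.02551 — 16 statements merged into one kernel-verified Lean document; each statement's English description precedes it below -/
import Mathlib

section
/- Let R be an integral domain with trivial Picard group (every invertible ideal of R is principal) and let a be an irreducible element of R. Then the principal ideal (a) is a molecule of R. -/
/-!
A factorization `(a) = J * K` in the monoid of ideals is also one among the invertible fractional
ideals, since `(a)` is invertible; so `J` and `K` are invertible, hence principal by the Picard
hypothesis, say `J = (b)` and `K = (c)`. Then `a` is associated to `b * c`, and irreducibility of
`a` forces `b` or `c` to be a unit.
-/

open FractionalIdeal nonZeroDivisors

theorem FractionalIdeal.isUnit_coeIdeal_span_singleton {R K : Type*} [CommRing R] [IsDomain R]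
    [Field K] [Algebra R K] [IsFractionRing R K] {a : R} (ha : a ≠ 0) :
    IsUnit ((Ideal.span {a} : Ideal R) : FractionalIdeal R⁰ K) := by
  rw [coeIdeal_span_singleton]
  exact IsUnit.of_mul_eq_one _ <|
    spanSingleton_mul_inv K <| (map_ne_zero_iff _ (IsFractionRing.injective R K)).mpr ha

theorem Irreducible.span_singleton_eq_top_or_of_span_singleton_eq_mul {R : Type*} [CommRing R]
    [IsDomain R] {a b c : R} (ha : Irreducible a)
    (h : Ideal.span {a} = Ideal.span {b} * Ideal.span {c}) :
    Ideal.span {b} = ⊤ ∨ Ideal.span {c} = ⊤ := by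
  rw [Ideal.span_singleton_mul_span_singleton, Ideal.span_singleton_eq_span_singleton] at h
  simpa only [Ideal.span_singleton_eq_top] using (h.irreducible ha).isUnit_or_isUnit rfl

/-- In a domain with trivial Picard group (every invertible ideal is principal),
the principal ideal generated by an irreducible element is a molecule. -/
theorem stmt_1 {R : Type*} [CommRing R] [IsDomain R]
    (hPic : ∀ I : Ideal R,
      IsUnit (I : FractionalIdeal (nonZeroDivisors R) (FractionRing R)) →
        Submodule.IsPrincipal I)
    (a : R) (ha : Irreducible a) :
    Ideal.span ({a} : Set R) ≠ ⊥ ∧ Ideal.span ({a} : Set R) ≠ ⊤ ∧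
      ∀ J K : Ideal R, Ideal.span ({a} : Set R) = J * K → J = ⊤ ∨ K = ⊤ := by
  refine ⟨by simpa only [ne_eq, Ideal.span_singleton_eq_bot] using ha.ne_zero,
    by simpa only [ne_eq, Ideal.span_singleton_eq_top] using ha.not_isUnit, fun J K hJK => ?_⟩
  obtain ⟨hJ, hK⟩ : IsUnit (J : FractionalIdeal R⁰ (FractionRing R)) ∧
      IsUnit (K : FractionalIdeal R⁰ (FractionRing R)) := by
    rw [← IsUnit.mul_iff, ← coeIdeal_mul, ← hJK]
    exact isUnit_coeIdeal_span_singleton ha.ne_zero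
  obtain ⟨b, rfl⟩ := hPic J hJ
  obtain ⟨c, rfl⟩ := hPic K hK
  exact ha.span_singleton_eq_top_or_of_span_singleton_eq_mul hJK
end

section
/- Let R be an integral domain, I a molecule of R, and J a proper ideal of R with I strictly contained in J. Then J is not a multiplication ideal of R. -/
/-- If `I` is a molecule of a domain `R` and `J` is a proper ideal strictly
containing `I`, then `J` is not a multiplication ideal. -/
theorem stmt_3 {R : Type*} [CommRing R] [IsDomain R] (I J : Ideal R)
    (hIne : I ≠ ⊥) (hIproper : I ≠ ⊤)
    (hmol : ∀ A B : Ideal R, I = A * B → A = ⊤ ∨ B = ⊤)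
    (hJproper : J ≠ ⊤) (hlt : I < J) :
    ¬(∀ A : Ideal R, A ≤ J → ∃ K : Ideal R, A = J * K) := by
  intro h
  obtain ⟨K, hK⟩ := h I hlt.le
  rcases hmol J K hK with hJ | hKtop
  · exact hJproper hJ
  · rw [hKtop, Ideal.mul_top] at hK
    exact hlt.ne hK
end

section
/- Let R be a subring of a domain S, and suppose every nonzero ideal of S is unit-cancellative. If every proper ideal I of R survives in S (i.e., IS is a proper ideal of S), then every nonzero ideal of R is unit-cancellative. -/
/-- If `R ⊆ S` is a survival extension of domains and every nonzero ideal of `S`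
is unit-cancellative, then every nonzero ideal of `R` is unit-cancellative. -/
theorem stmt_4 {R S : Type*} [CommRing R] [IsDomain R] [CommRing S] [IsDomain S]
    (f : R →+* S) (hf : Function.Injective f)
    (hS : ∀ I : Ideal S, I ≠ ⊥ → ∀ J : Ideal S, I = I * J → J = ⊤)
    (hsurv : ∀ I : Ideal R, I ≠ ⊤ → Ideal.map f I ≠ ⊤) :
    ∀ I : Ideal R, I ≠ ⊥ → ∀ J : Ideal R, I = I * J → J = ⊤ := by
  intro I hI J hIJ
  by_contra hJ
  have hmap : Ideal.map f I ≠ ⊥ := by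
    obtain ⟨x, hxI, hx0⟩ := Submodule.exists_mem_ne_zero_of_ne_bot hI
    intro h
    have : f x ∈ Ideal.map f I := Ideal.mem_map_of_mem f hxI
    rw [h, Ideal.mem_bot] at this
    exact hx0 (hf (by simpa using this))
  have : Ideal.map f I = Ideal.map f I * Ideal.map f J := by
    conv_lhs => rw [hIJ]
    exact Ideal.map_mul f I J
  exact hsurv J hJ (hS _ hmap _ this)
end

section
/- Let R be an integral domain such that for every maximal ideal M of R, the intersection of all powers M^n (n ≥ 0) is zero. Then every nonzero ideal of R is unit-cancellative. -/
theorem Ideal.eq_mul_pow_of_eq_mul {R : Type*} [CommSemiring R] {I J : Ideal R}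
    (h : I = I * J) (n : ℕ) : I = I * J ^ n := by
  induction n with
  | zero => simp
  | succ n ih => rw [pow_succ, ← mul_assoc, ← ih, ← h]

theorem Ideal.le_iInf_pow_of_eq_mul {R : Type*} [CommSemiring R] {I J : Ideal R}
    (h : I = I * J) : I ≤ ⨅ n : ℕ, J ^ n :=
  le_iInf fun n => (Ideal.eq_mul_pow_of_eq_mul h n).trans_le Ideal.mul_le_right

theorem stmt_5_general {R : Type*} [CommRing R]
    (hKrull : ∀ M : Ideal R, M.IsMaximal → (⨅ n : ℕ, M ^ n) = ⊥) :
    ∀ I : Ideal R, I ≠ ⊥ → ∀ J : Ideal R, I = I * J → J = ⊤ := by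
  intro I hI J hIJ
  by_contra hJ
  obtain ⟨M, hM, hJM⟩ := Ideal.exists_le_maximal J hJ
  have hIM : I ≤ ⨅ n : ℕ, M ^ n :=
    (Ideal.le_iInf_pow_of_eq_mul hIJ).trans (iInf_mono fun n => Ideal.pow_right_mono hJM n)
  exact hI (le_bot_iff.mp (hKrull M hM ▸ hIM))

/-- If a domain satisfies the conclusion of the Krull intersection theorem
(⋂ₙ Mⁿ = 0 for every maximal ideal M), then every nonzero ideal is
unit-cancellative. -/
theorem stmt_5 {R : Type*} [CommRing R] [IsDomain R]
    (hKrull : ∀ M : Ideal R, M.IsMaximal → (⨅ n : ℕ, M ^ n) = ⊥) :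
    ∀ I : Ideal R, I ≠ ⊥ → ∀ J : Ideal R, I = I * J → J = ⊤ :=
  stmt_5_general hKrull
end

section
/- Let R be an integral domain and I a nonzero proper ideal of R. Then I is a molecule of R if and only if (1) I is unit-cancellative and (2) for all ideals J and K of R with I = JK, either J = I or K = I. -/
/-- A nonzero proper ideal `I` of a domain is a molecule iff it is
unit-cancellative and every factorization of `I` has `I` itself as a factor. -/
theorem stmt_7 {R : Type*} [CommRing R] [IsDomain R] (I : Ideal R)
    (hne : I ≠ ⊥) (hproper : I ≠ ⊤) :
    (∀ J K : Ideal R, I = J * K → J = ⊤ ∨ K = ⊤) ↔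
      ((∀ J : Ideal R, I = I * J → J = ⊤) ∧
        (∀ J K : Ideal R, I = J * K → J = I ∨ K = I)) := by
  constructor
  · intro h
    constructor
    · intro J hJ
      rcases h I J hJ with h1 | h1
      · exact absurd h1 hproper
      · exact h1
    · intro J K hJK
      rcases h J K hJK with h1 | h1
      · right; rw [hJK, h1, Ideal.top_mul]
      · left; rw [hJK, h1, Ideal.mul_top]
  · rintro ⟨h1, h2⟩ J K hJK
    rcases h2 J K hJK with rfl | rfl
    · right; exact h1 K hJK
    · left; exact h1 J (hJK.trans (mul_comm J _))
end

section
/- Let R be an integral domain and P a nonzero prime ideal of R. Then P is a molecule of R if and only if P is unit-cancellative. -/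
theorem Ideal.IsPrime.eq_or_eq_of_eq_mul {R : Type*} [CommSemiring R] {P J K : Ideal R}
    (hP : P.IsPrime) (h : P = J * K) : J = P ∨ K = P := by
  rcases hP.mul_le.mp h.ge with hJ | hK
  · exact .inl (le_antisymm hJ (h ▸ Ideal.mul_le_left))
  · exact .inr (le_antisymm hK (h ▸ Ideal.mul_le_right))

theorem stmt_8_general {R : Type*} [CommRing R] (P : Ideal R)
    (hP : P.IsPrime) :
    (∀ J K : Ideal R, P = J * K → J = ⊤ ∨ K = ⊤) ↔
      (∀ J : Ideal R, P = P * J → J = ⊤) := by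
  constructor
  · intro hmolecule J hJ
    exact (hmolecule P J hJ).resolve_left hP.ne_top
  · intro hcancel J K hJK
    rcases hP.eq_or_eq_of_eq_mul hJK with hJP | hKP
    · exact .inr (hcancel K (hJP ▸ hJK))
    · exact .inl (hcancel J (hJK.trans (by rw [hKP, mul_comm])))

/-- A nonzero prime ideal of a domain is a molecule iff it is unit-cancellative. -/
theorem stmt_8 {R : Type*} [CommRing R] [IsDomain R] (P : Ideal R)
    (hne : P ≠ ⊥) (hP : P.IsPrime) :
    (∀ J K : Ideal R, P = J * K → J = ⊤ ∨ K = ⊤) ↔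
      (∀ J : Ideal R, P = P * J → J = ⊤) :=
  stmt_8_general P hP
end

section
/- Let R be an integral domain and M a maximal ideal of R with M nonzero. Then M is a molecule of R if and only if M is not idempotent (M ≠ M²). -/
theorem Ideal.IsMaximal.eq_top_or_eq_top_or_eq_sq_of_eq_mul {R : Type*} [CommSemiring R]
    {M J K : Ideal R} (hM : M.IsMaximal) (hJK : M = J * K) :
    J = ⊤ ∨ K = ⊤ ∨ M = M ^ 2 := by
  refine or_iff_not_imp_left.2 fun hJ => or_iff_not_imp_left.2 fun hK => ?_
  have hMJ : M = J := hM.eq_of_le hJ (hJK ▸ Ideal.mul_le_left)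
  have hMK : M = K := hM.eq_of_le hK (hJK ▸ Ideal.mul_le_right)
  calc M = J * K := hJK
    _ = M ^ 2 := by rw [← hMJ, ← hMK, sq]

theorem stmt_9_general {R : Type*} [CommRing R] (M : Ideal R)
    (hM : M.IsMaximal) :
    (∀ J K : Ideal R, M = J * K → J = ⊤ ∨ K = ⊤) ↔ M ≠ M ^ 2 := by
  constructor
  · intro hmol hsq
    rcases hmol M M (hsq.trans (sq M)) with h | h <;> exact hM.ne_top h
  · intro hsq J K hJK
    rcases hM.eq_top_or_eq_top_or_eq_sq_of_eq_mul hJK with h | h | h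
    exacts [Or.inl h, Or.inr h, absurd h hsq]

/-- A nonzero maximal ideal of a domain is a molecule iff it is not idempotent. -/
theorem stmt_9 {R : Type*} [CommRing R] [IsDomain R] (M : Ideal R)
    (hne : M ≠ ⊥) (hM : M.IsMaximal) :
    (∀ J K : Ideal R, M = J * K → J = ⊤ ∨ K = ⊤) ↔ M ≠ M ^ 2 :=
  stmt_9_general M hM
end

section
/- Let R be an integral domain, I a molecule of R, and J₁, ..., Jₙ pairwise comaximal ideals of R with J₁J₂⋯Jₙ ⊆ I. Then Jᵢ ⊆ I for some i. -/
/-!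
The ideals `I + Jᵢ` are pairwise comaximal, so their product is their intersection and
contains `I`; it is also contained in `I + ∏ᵢ Jᵢ = I`. Hence `I = ∏ᵢ (I + Jᵢ)`, and since a
molecule has no factorization into two proper ideals, some factor `I + Jᵢ` equals `I`.
-/

namespace Ideal

variable {R ι : Type*} [CommRing R] {I : Ideal R}

theorem sup_mul_sup_le_sup_mul (A B : Ideal R) : (I ⊔ A) * (I ⊔ B) ≤ I ⊔ A * B := by
  rw [sup_mul, mul_sup, mul_sup]
  exact sup_le (sup_le (le_sup_of_le_left mul_le_left) (le_sup_of_le_left mul_le_left))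
    (sup_le (le_sup_of_le_left mul_le_right) le_sup_right)

theorem prod_sup_le_sup_prod (s : Finset ι) (J : ι → Ideal R) :
    ∏ i ∈ s, (I ⊔ J i) ≤ I ⊔ ∏ i ∈ s, J i := by
  classical
  induction s using Finset.induction with
  | empty => simp
  | insert a s ha ih =>
    rw [Finset.prod_insert ha, Finset.prod_insert ha]
    exact (mul_mono_right ih).trans (sup_mul_sup_le_sup_mul _ _)

theorem eq_prod_sup_of_prod_le {s : Finset ι} {J : ι → Ideal R}
    (hJ : (s : Set ι).Pairwise fun i j ↦ J i ⊔ J j = ⊤) (h : ∏ i ∈ s, J i ≤ I) :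
    I = ∏ i ∈ s, (I ⊔ J i) := by
  have hcoprime : (s : Set ι).Pairwise (Function.onFun IsCoprime fun i ↦ I ⊔ J i) :=
    hJ.mono' fun i j (hij : J i ⊔ J j = ⊤) ↦ isCoprime_iff_sup_eq.mpr <|
      top_le_iff.mp <| hij ▸ sup_le_sup le_sup_right le_sup_right
  refine le_antisymm ?_ ((prod_sup_le_sup_prod s J).trans (sup_le le_rfl h))
  rw [prod_eq_iInf_of_pairwise_isCoprime hcoprime]
  exact le_iInf₂ fun i _ ↦ le_sup_left

theorem exists_eq_of_eq_prod (hI : I ≠ ⊤) (hmol : ∀ A B : Ideal R, I = A * B → A = ⊤ ∨ B = ⊤)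
    {s : Finset ι} {K : ι → Ideal R} (h : I = ∏ i ∈ s, K i) : ∃ i ∈ s, K i = I := by
  classical
  induction s using Finset.induction with
  | empty => exact absurd (by simpa using h) hI
  | insert a s ha ih =>
    rw [Finset.prod_insert ha] at h
    rcases hmol _ _ h with hKa | hrest
    · obtain ⟨i, hi, hKi⟩ := ih (by rwa [hKa, top_mul] at h)
      exact ⟨i, Finset.mem_insert_of_mem hi, hKi⟩
    · exact ⟨a, Finset.mem_insert_self a s, by rwa [hrest, mul_top, eq_comm] at h⟩

end Ideal

theorem stmt_10_general {R : Type*} [CommRing R] (I : Ideal R)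
    (hproper : I ≠ ⊤)
    (hmol : ∀ A B : Ideal R, I = A * B → A = ⊤ ∨ B = ⊤)
    (n : ℕ) (J : Fin n → Ideal R)
    (hcomax : ∀ i j, i ≠ j → J i ⊔ J j = ⊤)
    (hprod : (∏ i, J i) ≤ I) :
    ∃ i, J i ≤ I := by
  have hI : I = ∏ i, (I ⊔ J i) :=
    Ideal.eq_prod_sup_of_prod_le (fun i _ j _ hij ↦ hcomax i j hij) hprod
  obtain ⟨i, -, hi⟩ := Ideal.exists_eq_of_eq_prod hproper hmol hI
  exact ⟨i, sup_eq_left.mp hi⟩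

/-- If `I` is a molecule of a domain and `J₁, …, Jₙ` are pairwise comaximal
ideals whose product is contained in `I`, then some `Jᵢ ⊆ I`. -/
theorem stmt_10 {R : Type*} [CommRing R] [IsDomain R] (I : Ideal R)
    (hne : I ≠ ⊥) (hproper : I ≠ ⊤)
    (hmol : ∀ A B : Ideal R, I = A * B → A = ⊤ ∨ B = ⊤)
    (n : ℕ) (J : Fin n → Ideal R)
    (hcomax : ∀ i j, i ≠ j → J i ⊔ J j = ⊤)
    (hprod : (∏ i, J i) ≤ I) :
    ∃ i, J i ≤ I :=
  stmt_10_general I hproper hmol n J hcomax hprod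
end

section
/- Let R be an integral domain and I a molecule of R such that R/I is Artinian. Then I is a primary ideal of R. -/
/-!
A lift `x` of an idempotent of `R ⧸ I` factors `I` as `(I + (x)) * (I + (1 - x))`, so when `I` is a
molecule `R ⧸ I` has no idempotents besides `0` and `1`. In an Artinian ring two distinct primes
are separated by an idempotent, hence `R ⧸ I` is local. Its maximal ideal is then its nilradical,
so `√I` is maximal and `I` is primary.
-/

theorem IsArtinianRing.isLocalRing_of_isIdempotentElem_eq_zero_or_one {S : Type*} [CommRing S]
    [IsArtinianRing S] [Nontrivial S] (h : ∀ e : S, IsIdempotentElem e → e = 0 ∨ e = 1) :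
    IsLocalRing S := by
  obtain ⟨m, hm⟩ := Ideal.exists_maximal S
  refine .of_unique_max_ideal ⟨m, hm, fun q hq => ?_⟩
  by_contra hqm
  obtain ⟨e, hem, he, heq⟩ := exists_not_mem_forall_mem_of_ne m
  rcases h e he with rfl | rfl
  · exact hem m.zero_mem
  · exact hq.ne_top ((Ideal.eq_top_iff_one q).mpr (heq q hq.isPrime hqm))

namespace Ideal

variable {R : Type*} [CommRing R]

theorem eq_sup_span_singleton_mul_sup_span_singleton_one_sub {I : Ideal R} {x : R}
    (hx : x * (1 - x) ∈ I) : I = (I ⊔ span {x}) * (I ⊔ span {1 - x}) := by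
  apply le_antisymm
  · intro i hi
    rw [show i = x * i + i * (1 - x) by ring]
    exact add_mem
      (mul_mem_mul (mem_sup_right (mem_span_singleton_self x)) (mem_sup_left hi))
      (mul_mem_mul (mem_sup_left hi) (mem_sup_right (mem_span_singleton_self _)))
  · simp only [sup_mul, mul_sup, span_singleton_mul_span_singleton, sup_le_iff,
      span_singleton_le_iff_mem]
    exact ⟨⟨mul_le_right, mul_le_right⟩, mul_le_left, hx⟩

theorem isUnit_quotient_mk_of_sup_span_singleton_eq_top {I : Ideal R} {y : R}
    (h : I ⊔ span {y} = ⊤) : IsUnit (Quotient.mk I y) := by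
  have := congrArg (map (Quotient.mk I)) h
  rwa [map_sup, map_quotient_self, bot_sup_eq, map_span, Set.image_singleton, map_top,
    span_singleton_eq_top] at this

theorem Quotient.isIdempotentElem_eq_zero_or_one {I : Ideal R}
    (hmol : ∀ A B : Ideal R, I = A * B → A = ⊤ ∨ B = ⊤) {e : R ⧸ I} (he : IsIdempotentElem e) :
    e = 0 ∨ e = 1 := by
  obtain ⟨x, rfl⟩ := mk_surjective e
  have hx : x * (1 - x) ∈ I := by
    rw [← eq_zero_iff_mem, map_mul, map_sub, map_one, mul_sub, mul_one, he.eq, sub_self]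
  rcases hmol _ _ (eq_sup_span_singleton_mul_sup_span_singleton_one_sub hx) with h | h
  · exact .inr ((IsIdempotentElem.iff_eq_one_of_isUnit
      (isUnit_quotient_mk_of_sup_span_singleton_eq_top h)).mp he)
  · have hunit : IsUnit (1 - mk I x) := by
      simpa using isUnit_quotient_mk_of_sup_span_singleton_eq_top h
    have := (IsIdempotentElem.iff_eq_one_of_isUnit hunit).mp he.one_sub
    exact .inl (by simpa using this)

theorem isPrimary_of_isLocalRing_quotient (I : Ideal R) [IsArtinianRing (R ⧸ I)]
    [IsLocalRing (R ⧸ I)] : I.IsPrimary := by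
  have hrad : I.radical = (IsLocalRing.maximalIdeal (R ⧸ I)).comap (Quotient.mk I) := by
    rw [← IsLocalRing.jacobson_eq_maximalIdeal ⊥ bot_ne_top, IsArtinianRing.jacobson_eq_radical,
      comap_radical, ← RingHom.ker_eq_comap_bot, mk_ker]
  exact isPrimary_of_isMaximal_radical
    (hrad ▸ comap_isMaximal_of_surjective _ Quotient.mk_surjective)

end Ideal

theorem stmt_11_general {R : Type*} [CommRing R] (I : Ideal R)
    (hproper : I ≠ ⊤)
    (hmol : ∀ A B : Ideal R, I = A * B → A = ⊤ ∨ B = ⊤)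
    (hart : IsArtinianRing (R ⧸ I)) :
    I.IsPrimary := by
  have : Nontrivial (R ⧸ I) := Ideal.Quotient.nontrivial_iff.mpr hproper
  have : IsLocalRing (R ⧸ I) := IsArtinianRing.isLocalRing_of_isIdempotentElem_eq_zero_or_one
    fun _ => Ideal.Quotient.isIdempotentElem_eq_zero_or_one hmol
  exact I.isPrimary_of_isLocalRing_quotient

/-- A molecule `I` of a domain with `R/I` Artinian is a primary ideal. -/
theorem stmt_11 {R : Type*} [CommRing R] [IsDomain R] (I : Ideal R)
    (hne : I ≠ ⊥) (hproper : I ≠ ⊤)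
    (hmol : ∀ A B : Ideal R, I = A * B → A = ⊤ ∨ B = ⊤)
    (hart : IsArtinianRing (R ⧸ I)) :
    I.IsPrimary :=
  stmt_11_general I hproper hmol hart
end

section
/- Let R be an integral domain, I a molecule of R such that R/I is zero-dimensional with only finitely many maximal ideals, and suppose the nilradical of R/I is nilpotent. Then I is a primary ideal of R; more precisely, M^m ⊆ I ⊆ M for some maximal ideal M of R containing I and some positive integer m. -/
/-!
If two distinct maximal ideals contained `I`, the finitely many maximal ideals over `I` could be
split into `M₀` and the rest, with intersection `K`; then `M₀ᵐ` and `Kᵐ` are coprime and their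
product lies in `(√I)ᵐ ⊆ I`, so `I = (I + M₀ᵐ)(I + Kᵐ)` is a factorization into proper ideals.
Hence `√I` is the unique maximal ideal `M₀` over `I`, and `M₀ᵐ ⊆ I`.
-/

namespace Ideal

variable {R : Type*} [CommRing R]

theorem eq_sup_mul_sup_of_mul_le {I J K : Ideal R} (hJK : J ⊔ K = ⊤) (hle : J * K ≤ I) :
    I = (I ⊔ J) * (I ⊔ K) := by
  have hcop : (I ⊔ J) ⊔ (I ⊔ K) = ⊤ := top_unique (hJK ▸ sup_le_sup le_sup_right le_sup_right)
  refine le_antisymm ?_ ?_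
  · rw [mul_eq_inf_of_coprime hcop]
    exact le_inf le_sup_left le_sup_left
  · rw [mul_sup, sup_mul, sup_mul]
    exact sup_le (sup_le mul_le_right mul_le_right) (sup_le mul_le_left hle)

theorem sup_eq_top_or_sup_eq_top_of_mul_le {I J K : Ideal R}
    (hmol : ∀ A B : Ideal R, I = A * B → A = ⊤ ∨ B = ⊤) (hJK : J ⊔ K = ⊤) (hle : J * K ≤ I) :
    I ⊔ J = ⊤ ∨ I ⊔ K = ⊤ :=
  hmol _ _ (eq_sup_mul_sup_of_mul_le hJK hle)

theorem finite_setOf_isMaximal_le_of_finite_quotient {I : Ideal R}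
    (hfin : {M : Ideal (R ⧸ I) | M.IsMaximal}.Finite) :
    {M : Ideal R | M.IsMaximal ∧ I ≤ M}.Finite := by
  refine (hfin.image (comap (Quotient.mk I))).subset ?_
  rintro M ⟨hM, hIM⟩
  have hcomap : comap (Quotient.mk I) (map (Quotient.mk I) M) = M := comap_map_mk hIM
  refine ⟨_, ?_, hcomap⟩
  rcases map_eq_top_or_isMaximal_of_surjective (Quotient.mk I) Quotient.mk_surjective hM with h | h
  · exact absurd (hcomap.symm.trans (h ▸ comap_top)) hM.ne_top
  · exact h

theorem radical_eq_sInf_isMaximal_le {I : Ideal R}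
    (hI : ∀ P : Ideal R, P.IsPrime → I ≤ P → P.IsMaximal) :
    I.radical = sInf {M : Ideal R | M.IsMaximal ∧ I ≤ M} := by
  rw [radical_eq_sInf]
  congr 1
  ext P
  exact ⟨fun ⟨hIP, hP⟩ ↦ ⟨hI P hP hIP, hIP⟩, fun ⟨hP, hIP⟩ ↦ ⟨hIP, hP.isPrime⟩⟩

theorem radical_eq_of_mem_of_radical_eq_biInf {I : Ideal R} {s : Finset (Ideal R)}
    (hs : ∀ M ∈ s, M.IsMaximal) (hrad : I.radical = ⨅ M ∈ s, M) {m : ℕ} (hm : m ≠ 0)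
    (hnilp : I.radical ^ m ≤ I) (hmol : ∀ A B : Ideal R, I = A * B → A = ⊤ ∨ B = ⊤)
    {M₀ : Ideal R} (hM₀ : M₀ ∈ s) : I.radical = M₀ := by
  have hI : ∀ M ∈ s, I ≤ M := fun M hM ↦ le_radical.trans (hrad ▸ biInf_le _ hM)
  suffices hunique : ∀ M ∈ s, M = M₀ by
    rw [hrad]
    exact le_antisymm (biInf_le _ hM₀) (le_iInf₂ fun M hM ↦ (hunique M hM).ge)
  intro M₁ hM₁
  by_contra hne
  set K := ⨅ M ∈ s.erase M₀, M
  have hcop : M₀ ⊔ K = ⊤ := sup_iInf_eq_top fun M hM ↦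
    (hs M₀ hM₀).coprime_of_ne (hs M (Finset.mem_of_mem_erase hM)) (Finset.ne_of_mem_erase hM).symm
  have hprod : M₀ * K ≤ I.radical := by
    rw [hrad, ← Finset.insert_erase hM₀, Finset.iInf_insert]
    exact mul_le_inf
  have hprod_pow : M₀ ^ m * K ^ m ≤ I := by
    rw [← mul_pow]
    exact (pow_right_mono hprod m).trans hnilp
  rcases sup_eq_top_or_sup_eq_top_of_mul_le hmol (pow_sup_pow_eq_top hcop) hprod_pow with h | h
  · exact (hs M₀ hM₀).ne_top (top_unique (h ▸ sup_le (hI M₀ hM₀) (pow_le_self hm)))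
  · have hKM₁ : K ≤ M₁ := biInf_le _ (Finset.mem_erase.2 ⟨hne, hM₁⟩)
    exact (hs M₁ hM₁).ne_top (top_unique (h ▸ sup_le (hI M₁ hM₁) ((pow_le_self hm).trans hKM₁)))

end Ideal

theorem stmt_12_general {R : Type*} [CommRing R] (I : Ideal R)
    (hproper : I ≠ ⊤)
    (hmol : ∀ A B : Ideal R, I = A * B → A = ⊤ ∨ B = ⊤)
    (hzerodim : ∀ P : Ideal R, P.IsPrime → I ≤ P → P.IsMaximal)
    (hfin : {M : Ideal (R ⧸ I) | M.IsMaximal}.Finite)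
    (hnilp : ∃ m : ℕ, 1 ≤ m ∧ I.radical ^ m ≤ I) :
    I.IsPrimary ∧
      ∃ (M : Ideal R) (m : ℕ), M.IsMaximal ∧ 1 ≤ m ∧ M ^ m ≤ I ∧ I ≤ M := by
  obtain ⟨m, hm1, hm⟩ := hnilp
  obtain ⟨M₀, hM₀, hIM₀⟩ := I.exists_le_maximal hproper
  have hT := Ideal.finite_setOf_isMaximal_le_of_finite_quotient hfin
  have hrad : I.radical = ⨅ M ∈ hT.toFinset, M := by
    rw [Ideal.radical_eq_sInf_isMaximal_le hzerodim, sInf_eq_iInf]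
    simp only [Set.Finite.mem_toFinset]
  have hM₀rad : I.radical = M₀ :=
    Ideal.radical_eq_of_mem_of_radical_eq_biInf (fun M hM ↦ (hT.mem_toFinset.1 hM).1) hrad
      (Nat.one_le_iff_ne_zero.1 hm1) hm hmol (hT.mem_toFinset.2 ⟨hM₀, hIM₀⟩)
  exact ⟨Ideal.isPrimary_of_isMaximal_radical (hM₀rad ▸ hM₀), M₀, m, hM₀, hm1, hM₀rad ▸ hm, hIM₀⟩

/-- If `I` is a molecule of a domain `R` such that `R/I` is zero-dimensional
with finitely many maximal ideals and nilpotent nilradical, then `I` is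
primary; more precisely `Mᵐ ⊆ I ⊆ M` for some maximal ideal `M` and `m ≥ 1`. -/
theorem stmt_12 {R : Type*} [CommRing R] [IsDomain R] (I : Ideal R)
    (hne : I ≠ ⊥) (hproper : I ≠ ⊤)
    (hmol : ∀ A B : Ideal R, I = A * B → A = ⊤ ∨ B = ⊤)
    (hzerodim : ∀ P : Ideal R, P.IsPrime → I ≤ P → P.IsMaximal)
    (hfin : {M : Ideal (R ⧸ I) | M.IsMaximal}.Finite)
    (hnilp : ∃ m : ℕ, 1 ≤ m ∧ I.radical ^ m ≤ I) :
    I.IsPrimary ∧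
      ∃ (M : Ideal R) (m : ℕ), M.IsMaximal ∧ 1 ≤ m ∧ M ^ m ≤ I ∧ I ≤ M :=
  stmt_12_general I hproper hmol hzerodim hfin hnilp
end

section
/- An integral domain R is a Dedekind domain if and only if every nonzero proper ideal of R is a finite product of molecules and every molecule of R is a prime ideal. -/
/-!
In a Dedekind domain the ideals form a unique factorization monoid, whose irreducible elements
are the molecules; so molecules are prime and every ideal is a product of them.

Conversely, if molecules are prime, every nonzero proper ideal is a product of prime ideals, and
Matusita's argument applies. A prime factor of a nonzero principal ideal is invertible, and
factorizations into invertible primes are unique. If `P` is an invertible prime and `a ∉ P`,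
comparing the factorizations of `P + aR` and `P + a²R` modulo `P` gives `(P + aR)² = P + a²R`,
hence `P = P (P + aR)`, and cancelling `P` yields `P + aR = R`: invertible primes are maximal.
A nonzero prime `P` contains a prime factor `Q` of some nonzero principal ideal inside it; `Q` is
invertible, hence maximal, hence equal to `P`. So all nonzero ideals are invertible.
-/

open scoped nonZeroDivisors

namespace Ideal

section Invertible

variable {S : Type*} [CommRing S]

def IsInvertible (I : Ideal S) : Prop :=
  IsUnit (I : FractionalIdeal S⁰ (FractionRing S))

theorem IsInvertible.mul_left_cancel [IsDomain S] {I A B : Ideal S} (hI : I.IsInvertible)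
    (h : I * A = I * B) : A = B := by
  refine FractionalIdeal.coeIdeal_injective (K := FractionRing S) (IsUnit.mul_left_cancel hI ?_)
  simp only [← FractionalIdeal.coeIdeal_mul, h]

theorem isInvertible_span_singleton [IsDomain S] {a : S} (ha : a ≠ 0) :
    (span {a}).IsInvertible := by
  have hx : algebraMap S (FractionRing S) a ≠ 0 :=
    IsFractionRing.to_map_ne_zero_of_mem_nonZeroDivisors (mem_nonZeroDivisors_of_ne_zero ha)
  rw [IsInvertible, FractionalIdeal.coeIdeal_span_singleton]
  refine IsUnit.of_mul_eq_one (FractionalIdeal.spanSingleton S⁰ (algebraMap S _ a)⁻¹) ?_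
  rw [FractionalIdeal.spanSingleton_mul_spanSingleton, mul_inv_cancel₀ hx,
    FractionalIdeal.spanSingleton_one]

theorem IsInvertible.of_dvd {I J : Ideal S} (hJ : J.IsInvertible) (h : I ∣ J) :
    I.IsInvertible :=
  isUnit_of_dvd_unit (map_dvd (FractionalIdeal.coeIdealHom S⁰ (FractionRing S)) h) hJ

theorem isInvertible_multiset_prod {s : Multiset (Ideal S)} (h : ∀ I ∈ s, I.IsInvertible) :
    s.prod.IsInvertible := by
  rw [IsInvertible, ← FractionalIdeal.coeIdealHom_apply, map_multiset_prod,
    IsUnit.multisetProd_iff]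
  simpa [IsInvertible] using h

theorem multiset_eq_of_prod_eq_of_isInvertible [IsDomain S] {s t : Multiset (Ideal S)}
    (hs : ∀ P ∈ s, P.IsPrime ∧ P.IsInvertible) (ht : ∀ P ∈ t, P.IsPrime ∧ P.IsInvertible)
    (h : s.prod = t.prod) : s = t := by
  classical
  induction s using Multiset.strongInductionOn generalizing t with
  | _ s ih =>
  rcases s.empty_or_exists_mem with rfl | ⟨P₀, hP₀⟩
  · refine (Multiset.eq_zero_of_forall_notMem fun Q hQ => (ht Q hQ).1.ne_top ?_).symm
    rw [← isUnit_iff]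
    exact isUnit_of_dvd_one (by simpa [← h] using Multiset.dvd_prod hQ)
  obtain ⟨P, hPs, hPmin⟩ := s.finite_toSet.exists_minimal ⟨P₀, hP₀⟩
  obtain ⟨Q, hQt, hQP⟩ :=
    (hs P hPs).1.multiset_prod_le.mp (h ▸ le_of_dvd (Multiset.dvd_prod hPs))
  obtain ⟨P', hP's, hP'Q⟩ :=
    (ht Q hQt).1.multiset_prod_le.mp (h.symm ▸ le_of_dvd (Multiset.dvd_prod hQt))
  obtain rfl : Q = P := le_antisymm hQP (hPmin hP's (hP'Q.trans hQP) |>.trans hP'Q)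
  rw [← Multiset.cons_erase hPs, ← Multiset.cons_erase hQt]
  congr 1
  refine ih _ (Multiset.erase_lt.mpr hPs) (fun P hP => hs P (Multiset.mem_of_mem_erase hP))
    (fun P hP => ht P (Multiset.mem_of_mem_erase hP)) ((hs Q hPs).2.mul_left_cancel ?_)
  rw [← Multiset.prod_cons, ← Multiset.prod_cons, Multiset.cons_erase hPs,
    Multiset.cons_erase hQt, h]

theorem multiset_eq_of_prod_eq_span_singleton [IsDomain S] {s t : Multiset (Ideal S)} {a : S}
    (ha : a ≠ 0) (hs : ∀ P ∈ s, P.IsPrime) (ht : ∀ P ∈ t, P.IsPrime)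
    (hsa : s.prod = span {a}) (hta : t.prod = span {a}) : s = t := by
  have hinv {u : Multiset (Ideal S)} (hu : u.prod = span {a}) {P : Ideal S} (hP : P ∈ u) :
      P.IsInvertible :=
    (isInvertible_span_singleton ha).of_dvd (hu ▸ Multiset.dvd_prod hP)
  exact multiset_eq_of_prod_eq_of_isInvertible (fun P hP => ⟨hs P hP, hinv hsa hP⟩)
    (fun P hP => ⟨ht P hP, hinv hta hP⟩) (hsa.trans hta.symm)

theorem isDedekindDomain_of_forall_isInvertible [IsDomain S]
    (h : ∀ I : Ideal S, I ≠ ⊥ → I.IsInvertible) : IsDedekindDomain S := by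
  refine (isDedekindDomain_iff_mul_inv_cancel (K := FractionRing S)).mpr fun I hI => ?_
  rw [FractionalIdeal.mul_inv_cancel_iff_isUnit, ← FractionalIdeal.isUnit_num]
  exact h _ (FractionalIdeal.num_eq_zero_iff.not.mpr hI)

end Invertible

variable {R : Type*} [CommRing R]

theorem le_mul_sup_span_singleton {P : Ideal R} [hP : P.IsPrime] {a : R} (ha : a ∉ P)
    (h : P ≤ (P ⊔ span {a}) * (P ⊔ span {a})) : P ≤ P * (P ⊔ span {a}) := by
  have haA : a ∈ P ⊔ span {a} := mem_sup_right (mem_span_singleton_self a)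
  have hAA : (P ⊔ span {a}) * (P ⊔ span {a}) ≤ P * (P ⊔ span {a}) ⊔ span {a} := by
    rw [sup_mul]
    exact sup_le_sup_left Ideal.mul_le_left _
  intro p hp
  obtain ⟨q, hq, r, hr, rfl⟩ := Submodule.mem_sup.mp (hAA (h hp))
  obtain ⟨c, rfl⟩ := mem_span_singleton'.mp hr
  have hca : c * a ∈ P := by
    simpa only [add_sub_cancel_left] using P.sub_mem hp (Ideal.mul_le_left hq)
  exact add_mem hq (mul_mem_mul ((hP.mem_or_mem hca).resolve_right ha) haA)

theorem multiset_eq_of_map_quotient_eq {P : Ideal R} {s t : Multiset (Ideal R)}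
    (hs : ∀ J ∈ s, P ≤ J) (ht : ∀ J ∈ t, P ≤ J)
    (h : s.map (map (Quotient.mk P)) = t.map (map (Quotient.mk P))) : s = t := by
  have hcomap {u : Multiset (Ideal R)} (hu : ∀ J ∈ u, P ≤ J) :
      (u.map (map (Quotient.mk P))).map (comap (Quotient.mk P)) = u := by
    rw [Multiset.map_map]
    refine (Multiset.map_congr rfl fun J hJ => ?_).trans u.map_id'
    rw [Function.comp_apply, comap_map_of_surjective _ Quotient.mk_surjective,
      ← RingHom.ker_eq_comap_bot, mk_ker, sup_eq_left.mpr (hu J hJ)]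
  rw [← hcomap hs, h, hcomap ht]

end Ideal

def IdealsFactorIntoPrimes (R : Type*) [CommRing R] : Prop :=
  ∀ I : Ideal R, I ≠ ⊥ → I ≠ ⊤ → ∃ s : Multiset (Ideal R), (∀ J ∈ s, J.IsPrime) ∧ s.prod = I

namespace IdealsFactorIntoPrimes

open Ideal

variable {R : Type*} [CommRing R] [IsDomain R]

theorem sup_span_singleton_mul_self (hR : IdealsFactorIntoPrimes R) {P : Ideal R} [P.IsPrime]
    {a : R} (ha : a ∉ P) (hA : P ⊔ span {a} ≠ ⊤) :
    (P ⊔ span {a}) * (P ⊔ span {a}) = P ⊔ span {a ^ 2} := by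
  have ha0 : a ≠ 0 := fun h => ha (h ▸ P.zero_mem)
  have hfac {x : R} (hx : x ≠ 0) (hxtop : P ⊔ span {x} ≠ ⊤) : ∃ s : Multiset (Ideal R),
      (∀ J ∈ s, J.IsPrime ∧ P ≤ J) ∧ s.prod = P ⊔ span {x} := by
    obtain ⟨s, hs, hsx⟩ :=
      hR _ ((Submodule.ne_bot_iff _).mpr ⟨x, mem_sup_right (mem_span_singleton_self x), hx⟩) hxtop
    exact ⟨s, fun J hJ => ⟨hs J hJ, le_sup_left.trans (hsx ▸ le_of_dvd (Multiset.dvd_prod hJ))⟩,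
      hsx⟩
  set π := Ideal.Quotient.mk P
  have hmap (s : Multiset (Ideal R)) (x : R) (hsx : s.prod = P ⊔ span {x}) :
      (s.map (map π)).prod = span {π x} := by
    refine (map_multiset_prod (mapHom π) s).symm.trans ?_
    rw [mapHom_apply, hsx, Ideal.map_sup, map_quotient_self, map_span, Set.image_singleton,
      bot_sup_eq]
  have hprime (s : Multiset (Ideal R)) (hs : ∀ J ∈ s, J.IsPrime ∧ P ≤ J) :
      ∀ Q ∈ s.map (map π), Q.IsPrime := by
    simp only [Multiset.mem_map, forall_exists_index, and_imp, forall_apply_eq_imp_iff₂]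
    intro J hJ
    exact map_isPrime_of_surjective (H := (hs J hJ).1) Quotient.mk_surjective
      (mk_ker.trans_le (hs J hJ).2)
  obtain ⟨s, hs, hsA⟩ := hfac ha0 hA
  obtain ⟨t, ht, htB⟩ := hfac (pow_ne_zero 2 ha0) (ne_top_of_le_ne_top hA
    (sup_le_sup_left (span_singleton_le_span_singleton.mpr (dvd_pow_self a two_ne_zero)) _))
  have hπa : π a ≠ 0 := fun h => ha (Quotient.eq_zero_iff_mem.mp h)
  have hts : t.map (map π) = (s + s).map (map π) := by
    refine multiset_eq_of_prod_eq_span_singleton (pow_ne_zero 2 hπa) (hprime t ht)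
      (hprime _ fun J hJ => (Multiset.mem_add.mp hJ).elim (hs J) (hs J)) ?_ ?_
    · rw [hmap t _ htB, map_pow]
    · rw [Multiset.map_add, Multiset.prod_add, hmap s a hsA, span_singleton_mul_span_singleton,
        sq]
  rw [← hsA, ← htB, multiset_eq_of_map_quotient_eq (fun J hJ => (ht J hJ).2)
    (fun J hJ => (Multiset.mem_add.mp hJ).elim (fun h => (hs J h).2) (fun h => (hs J h).2)) hts,
    Multiset.prod_add]

theorem isMaximal_of_isInvertible (hR : IdealsFactorIntoPrimes R) {P : Ideal R} [hP : P.IsPrime]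
    (hPinv : P.IsInvertible) : P.IsMaximal := by
  refine ⟨⟨hP.ne_top, fun I hPI => ?_⟩⟩
  obtain ⟨a, haI, haP⟩ := SetLike.exists_of_lt hPI
  have hA : P ⊔ span {a} = ⊤ := by
    by_contra hA
    refine hA (hPinv.mul_left_cancel (le_antisymm ?_ ?_))
    · rw [mul_top]
      exact mul_le_left
    · rw [mul_top]
      refine le_mul_sup_span_singleton haP ?_
      rw [hR.sup_span_singleton_mul_self haP hA]
      exact le_sup_left
  exact top_le_iff.mp (hA ▸ sup_le hPI.le (span_singleton_le_iff_mem _ |>.mpr haI))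

theorem isInvertible_of_isPrime (hR : IdealsFactorIntoPrimes R) {P : Ideal R} [hP : P.IsPrime]
    (hP0 : P ≠ ⊥) : P.IsInvertible := by
  obtain ⟨a, haP, ha0⟩ := (Submodule.ne_bot_iff P).mp hP0
  have haP' : span {a} ≤ P := (span_singleton_le_iff_mem _).mpr haP
  obtain ⟨s, hs, hsa⟩ :=
    hR (span {a}) (span_singleton_eq_bot.not.mpr ha0) (ne_top_of_le_ne_top hP.ne_top haP')
  obtain ⟨Q, hQs, hQP⟩ := hP.multiset_prod_le.mp (hsa ▸ haP')
  have hQinv : Q.IsInvertible :=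
    (isInvertible_span_singleton ha0).of_dvd (hsa ▸ Multiset.dvd_prod hQs)
  rwa [← (hR.isMaximal_of_isInvertible (hP := hs Q hQs) hQinv).eq_of_le hP.ne_top hQP]

theorem isInvertible (hR : IdealsFactorIntoPrimes R) {I : Ideal R} (hI : I ≠ ⊥) :
    I.IsInvertible := by
  by_cases hItop : I = ⊤
  · rw [hItop, IsInvertible, FractionalIdeal.coeIdeal_top]
    exact isUnit_one
  obtain ⟨s, hs, rfl⟩ := hR I hI hItop
  refine isInvertible_multiset_prod fun J hJ => ?_
  exact hR.isInvertible_of_isPrime (hP := hs J hJ) fun hJ0 =>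
    hI (Multiset.prod_eq_zero (hJ0 ▸ hJ : ⊥ ∈ s))

theorem isDedekindDomain (hR : IdealsFactorIntoPrimes R) : IsDedekindDomain R :=
  isDedekindDomain_of_forall_isInvertible fun _ => hR.isInvertible

end IdealsFactorIntoPrimes

namespace Ideal

variable {R : Type*} [CommRing R]

def IsMolecule (J : Ideal R) : Prop :=
  J ≠ ⊥ ∧ J ≠ ⊤ ∧ ∀ A B : Ideal R, J = A * B → A = ⊤ ∨ B = ⊤

theorem isMolecule_iff_irreducible {J : Ideal R} : J.IsMolecule ↔ J ≠ ⊥ ∧ Irreducible J := by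
  simp only [IsMolecule, irreducible_iff, isUnit_iff]

theorem isMolecule_iff_prime [IsDedekindDomain R] {J : Ideal R} : J.IsMolecule ↔ Prime J := by
  rw [isMolecule_iff_irreducible, irreducible_iff_prime]
  exact ⟨And.right, fun h => ⟨h.ne_zero, h⟩⟩

end Ideal

/-- A domain is Dedekind iff it is molecular and every molecule is prime. -/
theorem stmt_13 {R : Type*} [CommRing R] [IsDomain R] :
    IsDedekindDomain R ↔
      ((∀ I : Ideal R, I ≠ ⊥ → I ≠ ⊤ →
          ∃ s : Multiset (Ideal R),
            (∀ J ∈ s, J ≠ ⊥ ∧ J ≠ ⊤ ∧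
              ∀ A B : Ideal R, J = A * B → A = ⊤ ∨ B = ⊤) ∧ I = s.prod) ∧
        (∀ J : Ideal R, J ≠ ⊥ → J ≠ ⊤ →
          (∀ A B : Ideal R, J = A * B → A = ⊤ ∨ B = ⊤) → J.IsPrime)) := by
  constructor
  · intro _
    refine ⟨fun I hI _ => ?_, fun J hJ0 hJtop hJ =>
      Ideal.isPrime_of_prime (Ideal.isMolecule_iff_prime.mp ⟨hJ0, hJtop, hJ⟩)⟩
    obtain ⟨s, hs, hsI⟩ := UniqueFactorizationMonoid.exists_prime_factors I hI
    exact ⟨s, fun J hJ => Ideal.isMolecule_iff_prime.mpr (hs J hJ),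
      (associated_iff_eq.mp hsI).symm⟩
  · rintro ⟨hfac, hprime⟩
    refine IdealsFactorIntoPrimes.isDedekindDomain fun I hI0 hItop => ?_
    obtain ⟨s, hs, rfl⟩ := hfac I hI0 hItop
    exact ⟨s, fun J hJ => hprime J (hs J hJ).1 (hs J hJ).2.1 (hs J hJ).2.2, rfl⟩
end

section
/- Let R be an integral domain in which every nonzero proper ideal is a finite product of molecules, and let I be a nonzero proper unit-cancellative ideal of R that is divisible by only finitely many molecules. Then I is divisible by only finitely many ideals of R (where J divides I means I = JK for some ideal K). -/
/-! If `I = J * K`, factoring `J` and `K` into molecules gives a molecular factorization of `I`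
in which `J` is the product of a submultiset. Unit-cancellativity of `I` makes the molecular
factorizations of `I` an antichain for multiset inclusion, and they all live over the finite set
of molecules dividing `I`, so Dickson's lemma leaves only finitely many of them. Molecules are
exactly the irreducible elements of the monoid `Ideal R`, whose only unit is `⊤`. -/

/-- Dickson's lemma, through the vector of multiplicities in `F → ℕ`. -/
theorem Multiset.partiallyWellOrderedOn_le_of_finite {α : Type*} {F : Set α} (hF : F.Finite) :
    {s : Multiset α | ∀ x ∈ s, x ∈ F}.PartiallyWellOrderedOn (· ≤ ·) := by
  classical
  have : Finite F := hF.to_subtype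
  let counts : Multiset α → F → ℕ := fun s x => s.count (x : α)
  rw [Set.partiallyWellOrderedOn_iff_exists_lt]
  intro f hf
  obtain ⟨m, n, hmn, hle⟩ :=
    (Set.isPWO_of_wellQuasiOrderedLE (Set.univ : Set (F → ℕ))).exists_lt (f := counts ∘ f)
      fun _ => Set.mem_univ _
  refine ⟨m, n, hmn, Multiset.le_iff_count.mpr fun x => ?_⟩
  by_cases hx : x ∈ F
  · exact hle ⟨x, hx⟩
  · rw [Multiset.count_eq_zero_of_notMem fun h => hx (hf m x h)]
    exact Nat.zero_le _

section Factorization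

variable {M : Type*} [CommMonoidWithZero M]

def irreducibleFactorizations (a : M) : Set (Multiset M) :=
  {s | (∀ p ∈ s, Irreducible p) ∧ s.prod = a}

theorem isAntichain_irreducibleFactorizations {a : M} (hcanc : ∀ b, a = a * b → IsUnit b) :
    IsAntichain (· ≤ ·) (irreducibleFactorizations a) := by
  intro s hs t ht hne hst
  obtain ⟨u, rfl⟩ := Multiset.le_iff_exists_add.mp hst
  obtain ⟨p, hp⟩ := Multiset.exists_mem_of_ne_zero (s := u) fun hu => hne (by rw [hu, add_zero])
  have hunit : IsUnit u.prod := hcanc _ <| by rw [← hs.2, ← Multiset.prod_add, ht.2, hs.2]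
  exact (ht.1 p (Multiset.mem_add.mpr (Or.inr hp))).not_isUnit
    (isUnit_of_dvd_unit (Multiset.dvd_prod hp) hunit)

theorem finite_irreducibleFactorizations {a : M} (hcanc : ∀ b, a = a * b → IsUnit b)
    (hfin : {p : M | Irreducible p ∧ p ∣ a}.Finite) :
    (irreducibleFactorizations a).Finite :=
  (isAntichain_irreducibleFactorizations hcanc).finite_of_partiallyWellOrderedOn <|
    (Multiset.partiallyWellOrderedOn_le_of_finite hfin).mono fun _ hs p hp =>
      ⟨hs.1 p hp, hs.2 ▸ Multiset.dvd_prod hp⟩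

theorem setOf_dvd_subset_prod_le_irreducibleFactorizations
    (hfact : ∀ x : M, x ≠ 0 → ∃ s : Multiset M, (∀ p ∈ s, Irreducible p) ∧ s.prod = x)
    {a : M} (ha : a ≠ 0) :
    {d | d ∣ a} ⊆ ⋃ s ∈ irreducibleFactorizations a, Multiset.prod '' Set.Iic s := by
  rintro d ⟨e, rfl⟩
  obtain ⟨sd, hsd, rfl⟩ := hfact d (left_ne_zero_of_mul ha)
  obtain ⟨se, hse, rfl⟩ := hfact e (right_ne_zero_of_mul ha)
  refine Set.mem_biUnion (x := sd + se) ⟨?_, Multiset.prod_add _ _⟩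
    ⟨sd, Multiset.le_add_right _ _, rfl⟩
  intro p hp
  rcases Multiset.mem_add.mp hp with hp | hp
  exacts [hsd p hp, hse p hp]

theorem finite_setOf_dvd_of_finite_setOf_irreducible_dvd
    (hfact : ∀ x : M, x ≠ 0 → ∃ s : Multiset M, (∀ p ∈ s, Irreducible p) ∧ s.prod = x)
    {a : M} (ha : a ≠ 0) (hcanc : ∀ b, a = a * b → IsUnit b)
    (hfin : {p : M | Irreducible p ∧ p ∣ a}.Finite) :
    {d | d ∣ a}.Finite := by
  classical
  exact ((finite_irreducibleFactorizations hcanc hfin).biUnion fun s _ =>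
    (Set.finite_Iic s).image _).subset (setOf_dvd_subset_prod_le_irreducibleFactorizations hfact ha)

end Factorization

theorem Ideal.irreducible_iff_ne_bot_ne_top {R : Type*} [CommSemiring R] {J : Ideal R} :
    Irreducible J ↔ J ≠ ⊥ ∧ J ≠ ⊤ ∧ ∀ A B : Ideal R, J = A * B → A = ⊤ ∨ B = ⊤ := by
  refine ⟨fun h => ⟨?_, ?_, ?_⟩, fun h => irreducible_iff.mpr ⟨?_, ?_⟩⟩
  · rintro rfl
    exact not_irreducible_zero h
  · exact fun htop => h.not_isUnit (Ideal.isUnit_iff.mpr htop)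
  · intro A B hAB
    simpa only [Ideal.isUnit_iff] using h.isUnit_or_isUnit hAB
  · rw [Ideal.isUnit_iff]
    exact h.2.1
  · intro A B hAB
    simpa only [Ideal.isUnit_iff] using h.2.2 A B hAB

theorem stmt_14_general {R : Type*} [CommRing R]
    (hmolec : ∀ I : Ideal R, I ≠ ⊥ → I ≠ ⊤ →
      ∃ s : Multiset (Ideal R),
        (∀ J ∈ s, J ≠ ⊥ ∧ J ≠ ⊤ ∧
          ∀ A B : Ideal R, J = A * B → A = ⊤ ∨ B = ⊤) ∧ I = s.prod)
    (I : Ideal R) (hne : I ≠ ⊥)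
    (hcanc : ∀ J : Ideal R, I = I * J → J = ⊤)
    (hfinmol : {J : Ideal R |
      (J ≠ ⊥ ∧ J ≠ ⊤ ∧ ∀ A B : Ideal R, J = A * B → A = ⊤ ∨ B = ⊤) ∧
        ∃ K : Ideal R, I = J * K}.Finite) :
    {J : Ideal R | ∃ K : Ideal R, I = J * K}.Finite := by
  simp only [← Ideal.irreducible_iff_ne_bot_ne_top] at hmolec hfinmol
  have hfact : ∀ J : Ideal R, J ≠ 0 →
      ∃ s : Multiset (Ideal R), (∀ P ∈ s, Irreducible P) ∧ s.prod = J := by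
    intro J hJ
    by_cases htop : J = ⊤
    · exact ⟨0, by simp [htop, Ideal.one_eq_top]⟩
    · obtain ⟨s, hs, rfl⟩ := hmolec J hJ htop
      exact ⟨s, hs, rfl⟩
  exact finite_setOf_dvd_of_finite_setOf_irreducible_dvd hfact hne
    (fun J h => Ideal.isUnit_iff.mpr (hcanc J h)) hfinmol

/-- In a molecular domain, a nonzero proper unit-cancellative ideal divisible
by only finitely many molecules is divisible by only finitely many ideals. -/
theorem stmt_14 {R : Type*} [CommRing R] [IsDomain R]
    (hmolec : ∀ I : Ideal R, I ≠ ⊥ → I ≠ ⊤ →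
      ∃ s : Multiset (Ideal R),
        (∀ J ∈ s, J ≠ ⊥ ∧ J ≠ ⊤ ∧
          ∀ A B : Ideal R, J = A * B → A = ⊤ ∨ B = ⊤) ∧ I = s.prod)
    (I : Ideal R) (hne : I ≠ ⊥) (hproper : I ≠ ⊤)
    (hcanc : ∀ J : Ideal R, I = I * J → J = ⊤)
    (hfinmol : {J : Ideal R |
      (J ≠ ⊥ ∧ J ≠ ⊤ ∧ ∀ A B : Ideal R, J = A * B → A = ⊤ ∨ B = ⊤) ∧
        ∃ K : Ideal R, I = J * K}.Finite) :
    {J : Ideal R | ∃ K : Ideal R, I = J * K}.Finite :=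
  stmt_14_general hmolec I hne hcanc hfinmol
end

section
/- Let R be a subring of a domain S with nonzero conductor (R : S) ≠ 0. If every nonzero ideal of R is divisible by only finitely many ideals of R, then every nonzero ideal of S is divisible by only finitely many ideals of S. -/
/-- If `R ⊆ S` are domains with nonzero conductor and every nonzero ideal of
`R` has finitely many divisors, then every nonzero ideal of `S` has finitely
many divisors. -/
theorem stmt_16 {R S : Type*} [CommRing R] [IsDomain R] [CommRing S] [IsDomain S]
    (f : R →+* S) (hf : Function.Injective f)
    (hcond : ∃ x : R, x ≠ 0 ∧ ∀ s : S, ∃ r : R, f x * s = f r)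
    (hR : ∀ I : Ideal R, I ≠ ⊥ →
      {J : Ideal R | ∃ K : Ideal R, I = J * K}.Finite) :
    ∀ I : Ideal S, I ≠ ⊥ →
      {J : Ideal S | ∃ K : Ideal S, I = J * K}.Finite := by
  obtain ⟨x, hx0, hx⟩ := hcond
  have hfx0 : f x ≠ 0 := fun h => hx0 (hf (by simpa using h))
  -- D J = span{f x} * J ;  φ J = comap f (D J)
  set D : Ideal S → Ideal S := fun J => Ideal.span {f x} * J with hD
  set φ : Ideal S → Ideal R := fun J => Ideal.comap f (D J) with hφ
  -- D J ⊆ range f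
  have hDrange : ∀ J : Ideal S, (D J : Set S) ⊆ Set.range f := by
    intro J y hy
    obtain ⟨z, _, hz⟩ := Ideal.mem_span_singleton_mul.mp hy
    obtain ⟨r, hr⟩ := hx z
    exact ⟨r, by rw [← hr, hz]⟩
  -- image of φ J is D J
  have himg : ∀ J : Ideal S, f '' (φ J : Set R) = (D J : Set S) := by
    intro J
    have := Set.image_preimage_eq_inter_range (f := f) (t := (D J : Set S))
    show f '' (f ⁻¹' (D J : Set S)) = (D J : Set S)
    rw [this, Set.inter_eq_self_of_subset_left (hDrange J)]
  -- φ is injective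
  have hinj : Function.Injective φ := by
    intro J J' h
    have hDJ : D J = D J' := by
      apply SetLike.coe_injective
      rw [← himg J, ← himg J', h]
    ext t
    constructor
    · intro ht
      have : f x * t ∈ D J' := by
        rw [← hDJ]
        exact Ideal.mem_span_singleton_mul.mpr ⟨t, ht, rfl⟩
      obtain ⟨u, hu, huu⟩ := Ideal.mem_span_singleton_mul.mp this
      rwa [← mul_left_cancel₀ hfx0 huu]
    · intro ht
      have : f x * t ∈ D J := by
        rw [hDJ]
        exact Ideal.mem_span_singleton_mul.mpr ⟨t, ht, rfl⟩
      obtain ⟨u, hu, huu⟩ := Ideal.mem_span_singleton_mul.mp this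
      rwa [← mul_left_cancel₀ hfx0 huu]
  -- φ J * φ K = comap f (D J * D K)
  have hmul : ∀ J K : Ideal S, φ J * φ K = Ideal.comap f (D J * D K) := by
    intro J K
    apply le_antisymm
    · rw [Ideal.mul_le]
      intro a ha b hb
      have : f (a * b) ∈ D J * D K := by
        rw [map_mul]
        exact Ideal.mul_mem_mul ha hb
      exact this
    · intro c hc
      have hc' : f c ∈ D J * D K := hc
      have key : f c ∈ f '' ((φ J * φ K : Ideal R) : Set R) := by
        refine Submodule.mul_induction_on hc' ?_ ?_
        · intro p hp q hq
          have hp' : p ∈ f '' (φ J : Set R) := by rw [himg J]; exact hp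
          have hq' : q ∈ f '' (φ K : Set R) := by rw [himg K]; exact hq
          obtain ⟨a, ha, rfl⟩ := hp'
          obtain ⟨b, hb, rfl⟩ := hq'
          exact ⟨a * b, Ideal.mul_mem_mul ha hb, map_mul f a b⟩
        · rintro y z ⟨a, ha, rfl⟩ ⟨b, hb, rfl⟩
          exact ⟨a + b, add_mem ha hb, map_add f a b⟩
      obtain ⟨d, hd, hdc⟩ := key
      rwa [← hf hdc]
  intro I hI
  -- the target ideal in R
  have hDD : ∀ J K : Ideal S, I = J * K → D J * D K = D (D I) := by
    intro J K hJK
    rw [hD]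
    simp only
    rw [hJK]
    ring
  have hI0 : φ (D I) ≠ ⊥ := by
    obtain ⟨s, hs, hs0⟩ := Submodule.ne_bot_iff I |>.mp hI
    obtain ⟨r, hr⟩ := hx (f x * s)
    have hmem : f x * (f x * s) ∈ D (D I) := by
      refine Ideal.mem_span_singleton_mul.mpr ⟨f x * s, ?_, rfl⟩
      exact Ideal.mem_span_singleton_mul.mpr ⟨s, hs, rfl⟩
    have hrmem : r ∈ φ (D I) := by
      show f r ∈ D (D I)
      rwa [← hr]
    have hr0 : r ≠ 0 := by
      intro h
      rw [h, map_zero] at hr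
      exact mul_ne_zero hfx0 (mul_ne_zero hfx0 hs0) hr
    exact Submodule.ne_bot_iff _ |>.mpr ⟨r, hrmem, hr0⟩
  refine Set.Finite.subset (Set.Finite.preimage hinj.injOn (hR (φ (D I)) hI0)) ?_
  rintro J ⟨K, hJK⟩
  exact ⟨φ K, by rw [hmul J K, hDD J K hJK]⟩
end

section
/- Let R be an integral domain, M a maximal ideal of R of height one, and I an ideal of the localization R_M. If C and D are ideals of R_M with I = CD, then I ∩ R = (C ∩ R)(D ∩ R). Moreover, I is the unique ideal of R_M whose contraction to R equals I ∩ R. -/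
/-!
`R_M` is a one-dimensional local domain, so the radical of a nonzero ideal of `R_M` contains
its maximal ideal; hence for nonzero `C` and `D` the radical of `(C ∩ R)(D ∩ R)` contains `M`. Such an
ideal of `R` is `R` or `M`-primary, and in both cases it is the contraction of its extension,
which here is `CD`. Uniqueness holds because every ideal of a localization is the extension of
its contraction.
-/

open IsLocalRing

theorem IsLocalRing.maximalIdeal_le_radical {A : Type*} [CommRing A] [IsLocalRing A]
    [Ring.DimensionLEOne A] {C : Ideal A} (hC : C ≠ ⊥) : maximalIdeal A ≤ C.radical := by
  rw [Ideal.radical_eq_sInf]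
  refine le_sInf fun P ⟨hCP, hP⟩ ↦ ?_
  have hP_ne_bot : P ≠ ⊥ := fun h ↦ hC (le_bot_iff.mp (h ▸ hCP))
  exact (eq_maximalIdeal (hP.isMaximal hP_ne_bot)).ge

namespace Localization.AtPrime

variable {R : Type*} [CommRing R] {M : Ideal R} [M.IsPrime]

theorem dimensionLEOne_of_forall_lt_eq_bot (hM : ∀ P : Ideal R, P.IsPrime → P < M → P = ⊥) :
    Ring.DimensionLEOne (Localization.AtPrime M) where
  maximalOfPrime {P} hP hP_prime := by
    have hP_under : P.under R ≠ ⊥ := fun h ↦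
      hP (by rw [← IsLocalization.map_under M.primeCompl _ P, h, Ideal.map_bot])
    have hP_le : P.under R ≤ M :=
      (Ideal.comap_mono (le_maximalIdeal hP_prime.ne_top)).trans AtPrime.under_maximalIdeal.le
    have hP_eq : P.under R = M :=
      hP_le.eq_or_lt.resolve_right fun hlt ↦ hP_under (hM _ (hP_prime.comap _) hlt)
    rw [AtPrime.eq_maximalIdeal_iff_under_eq.mp hP_eq]
    exact maximalIdeal.isMaximal _

theorem le_radical_under [Ring.DimensionLEOne (Localization.AtPrime M)]
    {C : Ideal (Localization.AtPrime M)} (hC : C ≠ ⊥) : M ≤ (C.under R).radical := by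
  rw [Ideal.under_def, ← Ideal.comap_radical]
  exact AtPrime.under_maximalIdeal.ge.trans (Ideal.comap_mono (maximalIdeal_le_radical hC))

theorem under_map_of_le_radical (hM : M.IsMaximal) {A : Ideal R} (hA : M ≤ A.radical) :
    (A.map (algebraMap R (Localization.AtPrime M))).under R = A := by
  rcases eq_or_ne A ⊤ with rfl | hA_ne_top
  · rw [Ideal.map_top, Ideal.under_def, Ideal.comap_top]
  have hA_rad : A.radical = M := (hM.eq_of_le (mt Ideal.radical_eq_top.mp hA_ne_top) hA).symm
  refine IsLocalization.under_map_of_isPrimary_disjoint M.primeCompl _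
    (Ideal.isPrimary_of_isMaximal_radical (hA_rad ▸ hM)) ?_
  exact Set.disjoint_compl_left_iff_subset.mpr (hA_rad ▸ Ideal.le_radical)

end Localization.AtPrime

theorem stmt_17_general {R : Type*} [CommRing R] [IsDomain R] (M : Ideal R)
    (hM : M.IsMaximal)
    (hht : ∀ P : Ideal R, P.IsPrime → P < M → P = ⊥)
    (I : Ideal (@Localization.AtPrime R _ M hM.isPrime)) :
    (∀ C D : Ideal (@Localization.AtPrime R _ M hM.isPrime), I = C * D →
      I.comap (algebraMap R (@Localization.AtPrime R _ M hM.isPrime)) =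
        C.comap (algebraMap R (@Localization.AtPrime R _ M hM.isPrime)) *
          D.comap (algebraMap R (@Localization.AtPrime R _ M hM.isPrime))) ∧
    (∀ J : Ideal (@Localization.AtPrime R _ M hM.isPrime),
      J.comap (algebraMap R (@Localization.AtPrime R _ M hM.isPrime)) =
        I.comap (algebraMap R (@Localization.AtPrime R _ M hM.isPrime)) →
          J = I) := by
  have := hM.isPrime
  have := Localization.AtPrime.dimensionLEOne_of_forall_lt_eq_bot hht
  refine ⟨fun C D hCD ↦ ?_, fun J hJ ↦ (IsLocalization.orderEmbedding M.primeCompl _).injective hJ⟩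
  subst hCD
  by_cases hC_or_hD : C = ⊥ ∨ D = ⊥
  · have hinj : Function.Injective (algebraMap R (Localization.AtPrime M)) :=
      IsLocalization.injective _ M.primeCompl_le_nonZeroDivisors
    obtain rfl | rfl := hC_or_hD <;> simp [Ideal.comap_bot_of_injective _ hinj]
  push Not at hC_or_hD
  have hrad : M ≤ (C.under R * D.under R).radical := by
    rw [Ideal.radical_mul]
    exact le_inf (Localization.AtPrime.le_radical_under hC_or_hD.1)
      (Localization.AtPrime.le_radical_under hC_or_hD.2)
  have hmap : (C.under R * D.under R).map (algebraMap R _) = C * D := by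
    rw [Ideal.map_mul, IsLocalization.map_under M.primeCompl, IsLocalization.map_under M.primeCompl]
  rw [← hmap]
  exact Localization.AtPrime.under_map_of_le_radical hM hrad

/-- Let `M` be a height-one maximal ideal of a domain `R` and `I` an ideal of
`R_M`. If `I = C * D`, then `I ∩ R = (C ∩ R)(D ∩ R)`; moreover, `I` is the
unique ideal of `R_M` contracting to `I ∩ R`. -/
theorem stmt_17 {R : Type*} [CommRing R] [IsDomain R] (M : Ideal R)
    (hM : M.IsMaximal) (hne : M ≠ ⊥)
    (hht : ∀ P : Ideal R, P.IsPrime → P < M → P = ⊥)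
    (I : Ideal (@Localization.AtPrime R _ M hM.isPrime)) :
    (∀ C D : Ideal (@Localization.AtPrime R _ M hM.isPrime), I = C * D →
      I.comap (algebraMap R (@Localization.AtPrime R _ M hM.isPrime)) =
        C.comap (algebraMap R (@Localization.AtPrime R _ M hM.isPrime)) *
          D.comap (algebraMap R (@Localization.AtPrime R _ M hM.isPrime))) ∧
    (∀ J : Ideal (@Localization.AtPrime R _ M hM.isPrime),
      J.comap (algebraMap R (@Localization.AtPrime R _ M hM.isPrime)) =
        I.comap (algebraMap R (@Localization.AtPrime R _ M hM.isPrime)) →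
          J = I) :=
  stmt_17_general M hM hht I
end

section
/- Let R be an integral domain of finite character (every nonzero element lies in only finitely many maximal ideals). If for each maximal ideal M of R every nonzero ideal of R_M is divisible by only finitely many ideals of R_M, then every nonzero ideal of R is divisible by only finitely many ideals of R. -/
/-!
A divisor `J` of `I` is determined by its localizations at the maximal ideals containing a fixed
nonzero `r ∈ I`: at any other maximal ideal `J` contains the unit `r`, so it localizes to `⊤`.
By finite character there are finitely many such maximal ideals, and the localization of `J` at
each of them divides the nonzero ideal `I_M`, which has only finitely many divisors.
-/

namespace Ideal

variable {R : Type*} [CommRing R]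

theorem eq_of_localization_maximal_of_mem {r : R} {J₁ J₂ : Ideal R} (h₁ : r ∈ J₁) (h₂ : r ∈ J₂)
    (h : ∀ v : MaximalSpectrum R, r ∈ v.asIdeal →
      J₁.map (algebraMap R (Localization.AtPrime v.asIdeal)) =
        J₂.map (algebraMap R (Localization.AtPrime v.asIdeal))) :
    J₁ = J₂ := by
  refine eq_of_localization_maximal fun P hP => ?_
  by_cases hrP : r ∈ P
  · exact h ⟨P, hP⟩ hrP
  · rw [IsLocalization.AtPrime.map_eq_top_of_not_le _ fun hle => hrP (hle h₁),
      IsLocalization.AtPrime.map_eq_top_of_not_le _ fun hle => hrP (hle h₂)]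

theorem mapsTo_map_divisors {S : Type*} [CommRing S] (f : R →+* S) (I : Ideal R) :
    Set.MapsTo (Ideal.map f) {J | ∃ K, I = J * K} {J | ∃ K, I.map f = J * K} := by
  rintro J ⟨K, rfl⟩
  exact ⟨K.map f, Ideal.map_mul f J K⟩

theorem finite_divisors_of_finite_divisors_localization {I : Ideal R} {r : R} (hrI : r ∈ I)
    (hr : {v : MaximalSpectrum R | r ∈ v.asIdeal}.Finite)
    (hloc : ∀ v : MaximalSpectrum R, r ∈ v.asIdeal →
      {J : Ideal (Localization.AtPrime v.asIdeal) |
        ∃ K, I.map (algebraMap R _) = J * K}.Finite) :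
    {J : Ideal R | ∃ K, I = J * K}.Finite := by
  have := hr.to_subtype
  let localize (J : Ideal R) (v : {v : MaximalSpectrum R | r ∈ v.asIdeal}) :=
    J.map (algebraMap R (Localization.AtPrime v.1.asIdeal))
  have hmaps : Set.MapsTo localize {J | ∃ K, I = J * K} (Set.univ.pi fun v =>
      {J | ∃ K, I.map (algebraMap R (Localization.AtPrime v.1.asIdeal)) = J * K}) :=
    fun J hJ v _ => mapsTo_map_divisors _ I hJ
  have hinj : Set.InjOn localize {J | ∃ K, I = J * K} := by
    have hr_mem : ∀ J ∈ {J | ∃ K, I = J * K}, r ∈ J := fun J ⟨K, hK⟩ =>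
      mul_le_left (show r ∈ J * K from hK ▸ hrI)
    intro J₁ hJ₁ J₂ hJ₂ hlocalize
    exact eq_of_localization_maximal_of_mem (hr_mem J₁ hJ₁) (hr_mem J₂ hJ₂)
      fun v hv => congrFun hlocalize ⟨v, hv⟩
  exact Set.Finite.of_injOn hmaps hinj (Set.Finite.pi fun v => hloc v.1 v.2)

end Ideal

/-- If a domain `R` has finite character and, for every maximal ideal `M`,
every nonzero ideal of `R_M` has finitely many divisors, then every nonzero
ideal of `R` has finitely many divisors. -/
theorem stmt_18 {R : Type*} [CommRing R] [IsDomain R]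
    (hfc : ∀ r : R, r ≠ 0 → {M : Ideal R | M.IsMaximal ∧ r ∈ M}.Finite)
    (hloc : ∀ (M : Ideal R) (hM : M.IsMaximal),
      ∀ I : Ideal (@Localization.AtPrime R _ M hM.isPrime), I ≠ ⊥ →
        {J : Ideal (@Localization.AtPrime R _ M hM.isPrime) |
          ∃ K, I = J * K}.Finite) :
    ∀ I : Ideal R, I ≠ ⊥ →
      {J : Ideal R | ∃ K : Ideal R, I = J * K}.Finite := by
  intro I hI
  obtain ⟨r, hrI, hr0⟩ := Submodule.exists_mem_ne_zero_of_ne_bot hI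
  have hr : {v : MaximalSpectrum R | r ∈ v.asIdeal}.Finite :=
    ((hfc r hr0).preimage fun v _ w _ h => MaximalSpectrum.ext h).subset
      fun v hv => ⟨v.isMaximal, hv⟩
  refine Ideal.finite_divisors_of_finite_divisors_localization hrI hr fun v _ => ?_
  refine hloc v.asIdeal v.isMaximal _ ?_
  exact (Ideal.map_eq_bot_iff_of_injective <| IsLocalization.injective _
    v.asIdeal.primeCompl_le_nonZeroDivisors).not.mpr hI
end

section
/- Let R be an integral domain and let P and Q be nonzero locally principal ideals of R such that P is prime and P + Q is a maximal ideal of R. Then for every positive integer n, the ideal P + Qⁿ is a molecule of R. -/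
/-!
Write `M = P + Q`. Any proper ideal containing `P + Qⁿ` lies in a maximal ideal containing `P`
and `Q`, i.e. in `M`; so a factorization `P + Qⁿ = J K` into proper ideals forces `P ⊆ M²`.
Localizing at `M`, `P` becomes `(p)` with `p` prime and `M` becomes `(p, q)`, and a prime `p`
never lies in `(p, q)²` unless `(p, q)` is the unit ideal.
-/

namespace Ideal

variable {R : Type*} [CommRing R]

theorem span_pair_sq_le (p q : R) :
    span {p, q} ^ 2 ≤ span {p} * span {p, q} ⊔ span {q ^ 2} := by
  have hp : p ∈ span {p, q} := subset_span (by simp)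
  have hq : q ∈ span {p, q} := subset_span (by simp)
  rw [sq, span_pair_mul_span_pair, span_le]
  simp only [Set.insert_subset_iff, Set.singleton_subset_iff, SetLike.mem_coe]
  refine ⟨?_, ?_, ?_, ?_⟩
  · exact mem_sup_left (mul_mem_mul (mem_span_singleton_self p) hp)
  · exact mem_sup_left (mul_mem_mul (mem_span_singleton_self p) hq)
  · exact mem_sup_left (mul_comm p q ▸ mul_mem_mul (mem_span_singleton_self p) hq)
  · exact mem_sup_right (sq q ▸ mem_span_singleton_self _)

/-- Writing `p = p x + d q²` with `x ∈ (p, q)`, primality of `p` puts `d q²` in `p (p, q)`;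
cancelling `p` then shows `1 - x ∈ (p, q)`. -/
theorem notMem_span_pair_sq [IsDomain R] {p q : R} (hp : Prime p) (hne : span {p, q} ≠ ⊤) :
    p ∉ span {p, q} ^ 2 := by
  intro h
  obtain ⟨_, hpx, _, hdq, hsum⟩ := Submodule.mem_sup.1 (span_pair_sq_le p q h)
  obtain ⟨x, hx, rfl⟩ := mem_span_singleton_mul.1 hpx
  obtain ⟨d, rfl⟩ := mem_span_singleton'.1 hdq
  have hdvd : p ∣ d * q ^ 2 := ⟨1 - x, by linear_combination hsum⟩
  obtain ⟨y, hy, hdy⟩ : ∃ y ∈ span {p, q}, d * q ^ 2 = p * y := by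
    rcases hp.dvd_or_dvd hdvd with ⟨r, rfl⟩ | hq
    · exact ⟨r * q * q, mul_mem_left _ _ (subset_span (by simp)), by ring⟩
    · obtain ⟨r, rfl⟩ := hp.dvd_of_dvd_pow hq
      exact ⟨d * r * (p * r), mul_mem_left _ _ (subset_span (by simp)), by ring⟩
  have hxy : 1 - x = y := mul_left_cancel₀ hp.ne_zero (by linear_combination -hsum + hdy)
  refine hne ((eq_top_iff_one _).2 ?_)
  rw [← add_sub_cancel x 1]
  exact add_mem hx (hxy ▸ hy)

theorem not_le_sup_sq_of_isPrincipal_map [IsDomain R] {P Q : Ideal R} [P.IsPrime]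
    [(P ⊔ Q).IsPrime] (hP : P ≠ ⊥)
    (hPloc : (P.map (algebraMap R (Localization.AtPrime (P ⊔ Q)))).IsPrincipal)
    (hQloc : (Q.map (algebraMap R (Localization.AtPrime (P ⊔ Q)))).IsPrincipal) :
    ¬P ≤ (P ⊔ Q) ^ 2 := by
  set f := algebraMap R (Localization.AtPrime (P ⊔ Q))
  obtain ⟨p, hp⟩ := hPloc.principal
  obtain ⟨q, hq⟩ := hQloc.principal
  have hp0 : p ≠ 0 := by
    rintro rfl
    have hf : Function.Injective f :=
      IsLocalization.injective _ (P ⊔ Q).primeCompl_le_nonZeroDivisors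
    refine hP ((map_eq_bot_iff_of_injective hf).1 ?_)
    simpa using hp
  have hprime : Prime p := by
    refine (span_singleton_prime hp0).1 ?_
    rw [← submodule_span_eq, ← hp]
    exact IsLocalization.isPrime_of_isPrime_disjoint (P ⊔ Q).primeCompl _ P ‹_›
      (Set.disjoint_left.2 fun _ hx hxP => hx (le_sup_left (b := Q) hxP))
  have hmap : (P ⊔ Q).map f = span {p, q} := by
    rw [map_sup, hp, hq, submodule_span_eq, submodule_span_eq, ← span_union,
      Set.singleton_union]
  have hne : span {p, q} ≠ ⊤ := by
    rw [← hmap, IsLocalization.AtPrime.map_eq_maximalIdeal]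
    exact IsLocalRing.maximalIdeal.isMaximal _ |>.ne_top
  intro hle
  apply notMem_span_pair_sq hprime hne
  rw [← hmap, ← Ideal.map_pow]
  exact map_mono hle (hp ▸ mem_span_singleton_self p)

theorem le_sup_of_sup_pow_le {P Q I : Ideal R} (hmax : (P ⊔ Q).IsMaximal) {n : ℕ} (hn : n ≠ 0)
    (hI : I ≠ ⊤) (hle : P ⊔ Q ^ n ≤ I) : I ≤ P ⊔ Q := by
  obtain ⟨N, hN, hIN⟩ := exists_le_maximal I hI
  have hQN : Q ≤ N := (hN.isPrime.pow_le_iff hn).1 (le_sup_right.trans (hle.trans hIN))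
  have hPN : P ≤ N := le_sup_left.trans (hle.trans hIN)
  exact hmax.eq_of_le hN.ne_top (sup_le hPN hQN) ▸ hIN

end Ideal

theorem stmt_19_general {R : Type*} [CommRing R] [IsDomain R] (P Q : Ideal R)
    (hPne : P ≠ ⊥)
    (hPloc : ∀ (M : Ideal R) (hM : M.IsMaximal),
      (P.map (algebraMap R (@Localization.AtPrime R _ M hM.isPrime))).IsPrincipal)
    (hQloc : ∀ (M : Ideal R) (hM : M.IsMaximal),
      (Q.map (algebraMap R (@Localization.AtPrime R _ M hM.isPrime))).IsPrincipal)
    (hP : P.IsPrime) (hmax : (P ⊔ Q).IsMaximal)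
    (n : ℕ) (hn : 1 ≤ n) :
    P ⊔ Q ^ n ≠ ⊥ ∧ P ⊔ Q ^ n ≠ ⊤ ∧
      ∀ J K : Ideal R, P ⊔ Q ^ n = J * K → J = ⊤ ∨ K = ⊤ := by
  have hn0 : n ≠ 0 := by omega
  refine ⟨fun h => hPne (le_bot_iff.1 (h ▸ le_sup_left)), fun h => ?_, fun J K hJK => ?_⟩
  · exact hmax.ne_top (top_le_iff.1 (h ▸ sup_le le_sup_left
      ((Ideal.pow_le_self hn0).trans le_sup_right)))
  · by_contra! hproper
    have hJ := Ideal.le_sup_of_sup_pow_le hmax hn0 hproper.1 (hJK ▸ Ideal.mul_le_left)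
    have hK := Ideal.le_sup_of_sup_pow_le hmax hn0 hproper.2 (hJK ▸ Ideal.mul_le_right)
    have : (P ⊔ Q).IsPrime := hmax.isPrime
    refine Ideal.not_le_sup_sq_of_isPrincipal_map hPne (hPloc _ hmax) (hQloc _ hmax) ?_
    rw [sq]
    exact le_sup_left.trans (hJK ▸ Ideal.mul_mono hJ hK)

/-- If `P` and `Q` are nonzero locally principal ideals of a domain `R` with
`P` prime and `P + Q` maximal, then `P + Qⁿ` is a molecule for every `n ≥ 1`. -/
theorem stmt_19 {R : Type*} [CommRing R] [IsDomain R] (P Q : Ideal R)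
    (hPne : P ≠ ⊥) (hQne : Q ≠ ⊥)
    (hPloc : ∀ (M : Ideal R) (hM : M.IsMaximal),
      (P.map (algebraMap R (@Localization.AtPrime R _ M hM.isPrime))).IsPrincipal)
    (hQloc : ∀ (M : Ideal R) (hM : M.IsMaximal),
      (Q.map (algebraMap R (@Localization.AtPrime R _ M hM.isPrime))).IsPrincipal)
    (hP : P.IsPrime) (hmax : (P ⊔ Q).IsMaximal)
    (n : ℕ) (hn : 1 ≤ n) :
    P ⊔ Q ^ n ≠ ⊥ ∧ P ⊔ Q ^ n ≠ ⊤ ∧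
      ∀ J K : Ideal R, P ⊔ Q ^ n = J * K → J = ⊤ ∨ K = ⊤ :=
  stmt_19_general P Q hPne hPloc hQloc hP hmax n hn
end
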